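/- arXiv:1711.10129 — 4 statements merged into one kernel-verified Lean document; each statement's English description precedes it below -/
import Mathlib

section
/- For a state x ∈ X, the δ-perturbed optimal cost Ĵ_δ(x) is finite for all δ > 0 if and only if x ∈ X̂, i.e., if and only if there exists a policy that is proper at x. -/
open scoped ENNReal
open Filter
open scoped Classical NNReal

/-- A stochastic shortest path (SSP) problem with state space `X`, control space `U`,
countable disturbance space `W`, a cost-free absorbing termination state `t`,
nonempty control constraint sets `Uc x ⊆ U`, disturbance distributions `P x u`,
system function `f`, and nonnegative (finite-valued) cost per stage `g`. -/
structure SSP (X U W : Type*) [Countable W] where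
  t : X
  Uc : X → Set U
  Uc_nonempty : ∀ x, (Uc x).Nonempty
  P : X → U → PMF W
  f : X → U → W → X
  g : X → U → W → ℝ≥0∞
  g_lt_top : ∀ x u w, g x u w < ⊤
  f_absorb : ∀ u ∈ Uc t, ∀ w, f t u w = t
  g_zero : ∀ u ∈ Uc t, ∀ w, g t u w = 0

namespace SSP

variable {X U W : Type*} [Countable W] (S : SSP X U W)

/-- A policy `π = (μ₀, μ₁, …)` is admissible if `μ_k(x) ∈ U(x)` for all `k, x`. -/
def IsPolicy (π : ℕ → X → U) : Prop := ∀ k x, π k x ∈ S.Uc x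

/-- Distribution of the state `x_k` after `k` steps under policy `π` starting from `x₀`. -/
noncomputable def stateDist (π : ℕ → X → U) (x₀ : X) : ℕ → PMF X
  | 0 => PMF.pure x₀
  | k + 1 => (stateDist π x₀ k).bind fun x => (S.P x (π k x)).map (S.f x (π k x))

/-- Expected value `E^π_{x₀}[J(x_k)]` of a nonnegative function along the trajectory. -/
noncomputable def expect (π : ℕ → X → U) (x₀ : X) (k : ℕ) (J : X → ℝ≥0∞) : ℝ≥0∞ :=
  ∑' x, S.stateDist π x₀ k x * J x

/-- Expected cost `E^π_{x₀}[g(x_k, μ_k(x_k), w_k)]` of the `k`-th stage. -/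
noncomputable def stageCost (π : ℕ → X → U) (x₀ : X) (k : ℕ) : ℝ≥0∞ :=
  S.expect π x₀ k fun x => ∑' w, S.P x (π k x) w * S.g x (π k x) w

/-- The cost `J_π(x₀) = Σ_{k≥0} E^π_{x₀}[g(x_k, μ_k(x_k), w_k)]` of a policy. -/
noncomputable def Jcost (π : ℕ → X → U) (x₀ : X) : ℝ≥0∞ :=
  ∑' k, S.stageCost π x₀ k

/-- `r_k(π, x₀)`: probability that `x_k ≠ t` under `π` starting from `x₀`. -/
noncomputable def r (π : ℕ → X → U) (x₀ : X) (k : ℕ) : ℝ≥0∞ :=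
  S.expect π x₀ k fun x => if x = S.t then 0 else 1

/-- `Σ_{k≥0} r_k(π,x₀)`: expected number of steps to reach the destination. -/
noncomputable def N (π : ℕ → X → U) (x₀ : X) : ℝ≥0∞ := ∑' k, S.r π x₀ k

/-- A policy is proper at `x` if it is admissible, `J_π(x) < ∞` and `Σ_k r_k(π,x) < ∞`. -/
def ProperAt (π : ℕ → X → U) (x : X) : Prop :=
  S.IsPolicy π ∧ S.Jcost π x < ⊤ ∧ S.N π x < ⊤

/-- The optimal cost function `J*`. -/
noncomputable def Jstar (x : X) : ℝ≥0∞ := ⨅ π ∈ {π | S.IsPolicy π}, S.Jcost π x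

/-- The restricted optimal cost function `Ĵ` over policies proper at `x`
(infimum over the empty set is `∞`). -/
noncomputable def Jhat (x : X) : ℝ≥0∞ := ⨅ π ∈ {π | S.ProperAt π x}, S.Jcost π x

/-- The effective domain `X̂ = {x | Ĵ(x) < ∞}` of `Ĵ`. -/
def Xhat : Set X := {x | S.Jhat x < ⊤}

/-- Expected `k`-th stage cost in the `δ`-perturbed problem (stage cost `g + δ` off `t`). -/
noncomputable def stageCostPert (δ : ℝ≥0∞) (π : ℕ → X → U) (x₀ : X) (k : ℕ) : ℝ≥0∞ :=
  S.expect π x₀ k fun x =>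
    ∑' w, S.P x (π k x) w * (S.g x (π k x) w + if x = S.t then 0 else δ)

/-- The cost `J_{π,δ}` of a policy in the `δ`-perturbed problem. -/
noncomputable def Jpert (δ : ℝ≥0∞) (π : ℕ → X → U) (x₀ : X) : ℝ≥0∞ :=
  ∑' k, S.stageCostPert δ π x₀ k

/-- The optimal cost function `Ĵ_δ` of the `δ`-perturbed problem. -/
noncomputable def JhatPert (δ : ℝ≥0∞) (x : X) : ℝ≥0∞ :=
  ⨅ π ∈ {π | S.IsPolicy π}, S.Jpert δ π x

/-- `Q J x u = E_{w∼P(·|x,u)}[g(x,u,w) + J(f(x,u,w))]`. -/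
noncomputable def Q (J : X → ℝ≥0∞) (x : X) (u : U) : ℝ≥0∞ :=
  ∑' w, S.P x u w * (S.g x u w + J (S.f x u w))

/-- The Bellman operator `(TJ)(x) = inf_{u ∈ U(x)} E[g(x,u,w) + J(f(x,u,w))]`. -/
noncomputable def bellman (J : X → ℝ≥0∞) (x : X) : ℝ≥0∞ := ⨅ u ∈ S.Uc x, S.Q J x u

/-- The tail policy `π_k = (μ_k, μ_{k+1}, …)`. -/
def tail (π : ℕ → X → U) (k : ℕ) : ℕ → X → U := fun m => π (k + m)

/-- The set `Ŵ` of functions `J` with `J(t) = 0`, `Ĵ ≤ J`, and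
`E^π_{x₀}[J(x_k)] → 0` for every pair `(π, x₀)` with `π` proper at `x₀`. -/
def What : Set (X → ℝ≥0∞) :=
  {J | J S.t = 0 ∧ S.Jhat ≤ J ∧
    ∀ π x₀, S.ProperAt π x₀ → Tendsto (fun k => S.expect π x₀ k J) atTop (nhds 0)}

/-- The set `B` of functions `J` with `J(t) = 0` that are bounded over `X̂`. -/
def Bset : Set (X → ℝ≥0∞) :=
  {J | J S.t = 0 ∧ (⨆ x ∈ S.Xhat, J x) < ⊤}

/-- A policy is uniformly proper if it is admissible and the expected number of steps
to reach the destination is uniformly bounded over `X̂`. -/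
def UniformlyProper (π : ℕ → X → U) : Prop :=
  S.IsPolicy π ∧ (⨆ x ∈ S.Xhat, S.N π x) < ⊤

/-- The cost per stage `g` is (uniformly) bounded over `X × U × W`. -/
def BoundedCost : Prop := ∃ b : ℝ≥0∞, b < ⊤ ∧ ∀ x u w, S.g x u w ≤ b

end SSP


private lemma jpert_eq_aux {X U W : Type*} [Countable W] (S : SSP X U W) (δ : ℝ≥0∞)
    (π : ℕ → X → U) (x : X) :
    S.Jpert δ π x = S.Jcost π x + S.N π x * δ := by
  have hstep : ∀ k, S.stageCostPert δ π x k = S.stageCost π x k + S.r π x k * δ := by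
    intro k
    unfold SSP.stageCostPert SSP.stageCost SSP.r SSP.expect
    rw [← ENNReal.tsum_mul_right, ← ENNReal.tsum_add]
    apply tsum_congr; intro y
    dsimp only
    have h1 : (∑' w, S.P y (π k y) w * (S.g y (π k y) w + (if y = S.t then 0 else δ)))
        = (∑' w, S.P y (π k y) w * S.g y (π k y) w) + (if y = S.t then 0 else δ) := by
      simp_rw [mul_add]
      rw [ENNReal.tsum_add, ENNReal.tsum_mul_right, (S.P y (π k y)).tsum_coe, one_mul]
    rw [h1, mul_add, mul_assoc]
    congr 1
    by_cases h : y = S.t <;> simp [h]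
  unfold SSP.Jpert SSP.Jcost SSP.N
  rw [← ENNReal.tsum_mul_right, ← ENNReal.tsum_add]
  exact tsum_congr hstep

/-- `Ĵ_δ(x) < ∞` for all `δ > 0` if and only if `x ∈ X̂`,
i.e., if and only if there exists a policy proper at `x`. -/
theorem perturbed_opt_finite_iff_mem_Xhat {X U W : Type*} [Countable W] (S : SSP X U W) (x : X) :
    ((∀ δ : ℝ≥0, 0 < δ → S.JhatPert (δ : ℝ≥0∞) x < ⊤) ↔ x ∈ S.Xhat) ∧
    (x ∈ S.Xhat ↔ ∃ π : ℕ → X → U, S.ProperAt π x) := by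
  have main : x ∈ S.Xhat ↔ ∃ π : ℕ → X → U, S.ProperAt π x := by
    constructor
    · intro hx
      by_contra hne
      push_neg at hne
      have : S.Jhat x = ⊤ := by
        unfold SSP.Jhat
        rw [iInf_eq_top]
        intro π
        rw [iInf_eq_top]
        intro hπ
        exact absurd hπ (hne π)
      simp [SSP.Xhat, this] at hx
    · rintro ⟨π, hπ⟩
      have h1 : S.Jhat x ≤ S.Jcost π x := biInf_le _ hπ
      exact lt_of_le_of_lt h1 hπ.2.1
  refine ⟨?_, main⟩
  constructor
  · intro h
    have h1 := h 1 one_pos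
    simp only [ENNReal.coe_one] at h1
    rw [main]
    unfold SSP.JhatPert at h1
    obtain ⟨π, hπ⟩ : ∃ π, S.IsPolicy π ∧ S.Jpert 1 π x < ⊤ := by
      by_contra hc
      push_neg at hc
      have : S.JhatPert 1 x = ⊤ := by
        unfold SSP.JhatPert
        rw [iInf_eq_top]
        intro π
        rw [iInf_eq_top]
        intro hπ
        exact top_le_iff.mp (hc π hπ)
      unfold SSP.JhatPert at this
      rw [this] at h1
      exact lt_irrefl _ h1
    refine ⟨π, hπ.1, ?_, ?_⟩
    · refine lt_of_le_of_lt ?_ hπ.2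
      rw [jpert_eq_aux]
      exact le_self_add
    · have : S.N π x * 1 ≤ S.Jpert 1 π x := by
        rw [jpert_eq_aux]
        exact le_add_self
      rw [mul_one] at this
      exact lt_of_le_of_lt this hπ.2
  · intro hx δ hδ
    obtain ⟨π, hπ⟩ := main.mp hx
    have hle : S.JhatPert (δ : ℝ≥0∞) x ≤ S.Jpert (δ : ℝ≥0∞) π x := biInf_le _ hπ.1
    refine lt_of_le_of_lt hle ?_
    rw [jpert_eq_aux]
    exact ENNReal.add_lt_top.mpr ⟨hπ.2.1,
      ENNReal.mul_lt_top hπ.2.2 ENNReal.coe_lt_top⟩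
end

section
/- Fix δ > 0 and ε > 0. There exists a policy π_ε with J_{π_ε,δ}(x) ≤ Ĵ_δ(x) + ε for all x ∈ X, and every policy π_ε satisfying this inequality is proper at every state x ∈ X̂. -/
open scoped ENNReal
open Filter
open scoped Classical NNReal

/-!
The `δ`-perturbed problem is itself an SSP (`SSP.perturb`), whose cost is
`J_{π,δ} = J_π + δ · Σ_k r_k(π, ·)`. In any SSP the optimal cost satisfies `T J* ≤ J*`, so at every
stage `k` and state `x` some control `u` has `Q J* x u ≤ J*(x) + ε_k`; choosing `Σ ε_k < ε` and
telescoping this inequality along the trajectory bounds every finite-horizon cost of the resulting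
policy by `J*(x) + ε`. For `x ∈ X̂` a policy proper at `x` has finite perturbed cost, so
`Ĵ_δ(x) < ∞`; an `ε`-optimal policy then has `J_{π,δ}(x) < ∞`, which forces `J_π(x) < ∞` and,
since `δ > 0`, `Σ_k r_k(π, x) < ∞`.
-/

namespace PMF

variable {α β : Type*}

theorem tsum_bind_mul (p : PMF α) (q : α → PMF β) (J : β → ℝ≥0∞) :
    ∑' b, p.bind q b * J b = ∑' a, p a * ∑' b, q a b * J b := by
  simp only [bind_apply, ← ENNReal.tsum_mul_right, ← ENNReal.tsum_mul_left, mul_assoc]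
  exact ENNReal.tsum_comm

theorem tsum_map_mul (p : PMF α) (f : α → β) (J : β → ℝ≥0∞) :
    ∑' b, p.map f b * J b = ∑' a, p a * J (f a) := by
  rw [map, tsum_bind_mul]
  congr! with a
  rw [tsum_eq_single (f a) fun b hb => by simp [hb]]
  simp

theorem tsum_mul_add_const (p : PMF α) (J : α → ℝ≥0∞) (c : ℝ≥0∞) :
    ∑' a, p a * (J a + c) = ∑' a, p a * J a + c := by
  simp only [mul_add, ENNReal.tsum_add, ENNReal.tsum_mul_right, tsum_coe, one_mul]

end PMF

namespace SSP

variable {X U W : Type*} [Countable W] (S : SSP X U W)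

lemma isPolicy_tail {π : ℕ → X → U} (hπ : S.IsPolicy π) (j : ℕ) : S.IsPolicy (tail π j) :=
  fun k => hπ (j + k)

section Expectation

variable (π : ℕ → X → U) (x₀ : X)

lemma stateDist_succ_eq_bind_tail (k : ℕ) :
    S.stateDist π x₀ (k + 1) =
      (S.P x₀ (π 0 x₀)).bind fun w => S.stateDist (tail π 1) (S.f x₀ (π 0 x₀) w) k := by
  induction k with
  | zero => simp [stateDist, PMF.map, Function.comp_def]
  | succ k ih =>
    rw [stateDist, ih, PMF.bind_bind]
    simp only [stateDist, tail, Nat.add_comm 1 k]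

lemma expect_zero (J : X → ℝ≥0∞) : S.expect π x₀ 0 J = J x₀ := by
  simp [expect, stateDist, PMF.pure_apply, tsum_ite_eq]

lemma expect_succ (k : ℕ) (J : X → ℝ≥0∞) :
    S.expect π x₀ (k + 1) J =
      S.expect π x₀ k fun x => ∑' w, S.P x (π k x) w * J (S.f x (π k x) w) := by
  simp only [expect, stateDist, PMF.tsum_bind_mul, PMF.tsum_map_mul]

lemma expect_succ_eq_tsum_tail (k : ℕ) (J : X → ℝ≥0∞) :
    S.expect π x₀ (k + 1) J =
      ∑' w, S.P x₀ (π 0 x₀) w * S.expect (tail π 1) (S.f x₀ (π 0 x₀) w) k J := by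
  rw [expect, stateDist_succ_eq_bind_tail, PMF.tsum_bind_mul]
  rfl

lemma expect_add (k : ℕ) (J J' : X → ℝ≥0∞) :
    S.expect π x₀ k (fun x => J x + J' x) = S.expect π x₀ k J + S.expect π x₀ k J' := by
  simp only [expect, mul_add, ENNReal.tsum_add]

lemma expect_const_mul (k : ℕ) (c : ℝ≥0∞) (J : X → ℝ≥0∞) :
    S.expect π x₀ k (fun x => c * J x) = c * S.expect π x₀ k J := by
  simp only [expect, ← ENNReal.tsum_mul_left, mul_left_comm]

lemma expect_const (k : ℕ) (c : ℝ≥0∞) : S.expect π x₀ k (fun _ => c) = c := by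
  simp only [expect, ENNReal.tsum_mul_right, PMF.tsum_coe, one_mul]

lemma expect_mono (k : ℕ) {J J' : X → ℝ≥0∞} (h : J ≤ J') :
    S.expect π x₀ k J ≤ S.expect π x₀ k J' :=
  ENNReal.tsum_le_tsum fun x => by gcongr; exact h x

end Expectation

section Optimality

lemma stageCost_succ (π : ℕ → X → U) (x₀ : X) (k : ℕ) :
    S.stageCost π x₀ (k + 1) =
      ∑' w, S.P x₀ (π 0 x₀) w * S.stageCost (tail π 1) (S.f x₀ (π 0 x₀) w) k := by
  simp only [stageCost, expect_succ_eq_tsum_tail, tail, Nat.add_comm 1 k]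

lemma Jcost_eq_Q_tail (π : ℕ → X → U) (x₀ : X) :
    S.Jcost π x₀ = S.Q (S.Jcost (tail π 1)) x₀ (π 0 x₀) := by
  rw [Jcost, tsum_eq_zero_add' ENNReal.summable, stageCost, expect_zero]
  simp only [stageCost_succ]
  rw [ENNReal.tsum_comm]
  simp only [Q, Jcost, ENNReal.tsum_mul_left, mul_add, ENNReal.tsum_add]

lemma Q_mono {J J' : X → ℝ≥0∞} (h : J ≤ J') (x : X) (u : U) : S.Q J x u ≤ S.Q J' x u :=
  ENNReal.tsum_le_tsum fun w => by gcongr; exact h _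

lemma Q_Jstar_le_Jcost {π : ℕ → X → U} (hπ : S.IsPolicy π) (x : X) :
    S.Q S.Jstar x (π 0 x) ≤ S.Jcost π x := by
  rw [Jcost_eq_Q_tail]
  exact S.Q_mono (fun y => iInf₂_le _ (S.isPolicy_tail hπ 1)) x _

lemma bellman_Jstar_le (x : X) : S.bellman S.Jstar x ≤ S.Jstar x :=
  le_iInf₂ fun π hπ => (iInf₂_le (π 0 x) (hπ 0 x)).trans (S.Q_Jstar_le_Jcost hπ x)

lemma exists_Q_Jstar_le_add {c : ℝ≥0∞} (hc : c ≠ 0) (x : X) :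
    ∃ u ∈ S.Uc x, S.Q S.Jstar x u ≤ S.Jstar x + c := by
  by_cases htop : S.Jstar x = ⊤
  · obtain ⟨u, hu⟩ := S.Uc_nonempty x
    exact ⟨u, hu, by simp [htop]⟩
  · have : S.bellman S.Jstar x < S.Jstar x + c :=
      (S.bellman_Jstar_le x).trans_lt (ENNReal.lt_add_right htop hc)
    simp only [bellman, iInf_lt_iff] at this
    obtain ⟨u, hu, hlt⟩ := this
    exact ⟨u, hu, hlt.le⟩

variable {S}

lemma stageCost_add_expect_succ_le {π : ℕ → X → U} {k : ℕ} {c : ℝ≥0∞}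
    (hk : ∀ x, S.Q S.Jstar x (π k x) ≤ S.Jstar x + c) (x₀ : X) :
    S.stageCost π x₀ k + S.expect π x₀ (k + 1) S.Jstar ≤ S.expect π x₀ k S.Jstar + c := by
  calc S.stageCost π x₀ k + S.expect π x₀ (k + 1) S.Jstar
      = S.expect π x₀ k fun x => S.Q S.Jstar x (π k x) := by
        simp only [stageCost, expect_succ, ← expect_add, Q, mul_add, ENNReal.tsum_add]
    _ ≤ S.expect π x₀ k (fun x => S.Jstar x + c) := S.expect_mono π x₀ k hk
    _ = S.expect π x₀ k S.Jstar + c := by rw [expect_add, expect_const]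

lemma sum_stageCost_add_expect_le {π : ℕ → X → U} {tol : ℕ → ℝ≥0∞}
    (hπ : ∀ k x, S.Q S.Jstar x (π k x) ≤ S.Jstar x + tol k) (x₀ : X) (n : ℕ) :
    ∑ k ∈ Finset.range n, S.stageCost π x₀ k + S.expect π x₀ n S.Jstar ≤
      S.Jstar x₀ + ∑ k ∈ Finset.range n, tol k := by
  induction n with
  | zero => simp [expect_zero]
  | succ n ih =>
    calc ∑ k ∈ Finset.range (n + 1), S.stageCost π x₀ k + S.expect π x₀ (n + 1) S.Jstar
        = ∑ k ∈ Finset.range n, S.stageCost π x₀ k +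
            (S.stageCost π x₀ n + S.expect π x₀ (n + 1) S.Jstar) := by
          rw [Finset.sum_range_succ, add_assoc]
      _ ≤ ∑ k ∈ Finset.range n, S.stageCost π x₀ k + (S.expect π x₀ n S.Jstar + tol n) :=
          add_le_add le_rfl (stageCost_add_expect_succ_le (hπ n) x₀)
      _ ≤ S.Jstar x₀ + ∑ k ∈ Finset.range (n + 1), tol k := by
          rw [Finset.sum_range_succ, ← add_assoc, ← add_assoc]
          gcongr

lemma Jcost_le_Jstar_add_tsum {π : ℕ → X → U} {tol : ℕ → ℝ≥0∞}
    (hπ : ∀ k x, S.Q S.Jstar x (π k x) ≤ S.Jstar x + tol k) (x₀ : X) :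
    S.Jcost π x₀ ≤ S.Jstar x₀ + ∑' k, tol k := by
  rw [Jcost, ENNReal.tsum_eq_iSup_nat]
  refine iSup_le fun n => ?_
  calc ∑ k ∈ Finset.range n, S.stageCost π x₀ k
      ≤ ∑ k ∈ Finset.range n, S.stageCost π x₀ k + S.expect π x₀ n S.Jstar := le_self_add
    _ ≤ S.Jstar x₀ + ∑ k ∈ Finset.range n, tol k := sum_stageCost_add_expect_le hπ x₀ n
    _ ≤ S.Jstar x₀ + ∑' k, tol k := by gcongr; exact ENNReal.sum_le_tsum _

variable (S)

theorem exists_isPolicy_Jcost_le_Jstar_add {ε : ℝ≥0∞} (hε : ε ≠ 0) :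
    ∃ π, S.IsPolicy π ∧ ∀ x, S.Jcost π x ≤ S.Jstar x + ε := by
  obtain ⟨tol, htol_pos, htol_sum⟩ := ENNReal.exists_pos_sum_of_countable' hε ℕ
  choose π hπ_mem hπ_le using fun k => S.exists_Q_Jstar_le_add (htol_pos k).ne'
  exact ⟨π, hπ_mem, fun x => (Jcost_le_Jstar_add_tsum hπ_le x).trans (by gcongr)⟩

end Optimality

section Perturbation

noncomputable def perturb (δ : ℝ≥0) : SSP X U W where
  t := S.t
  Uc := S.Uc
  Uc_nonempty := S.Uc_nonempty
  P := S.P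
  f := S.f
  g x u w := S.g x u w + if x = S.t then 0 else (δ : ℝ≥0∞)
  g_lt_top x u w := ENNReal.add_lt_top.2 ⟨S.g_lt_top x u w, by split_ifs <;> simp⟩
  f_absorb := S.f_absorb
  g_zero u hu w := by simp [S.g_zero u hu w]

lemma perturb_stateDist (δ : ℝ≥0) : (S.perturb δ).stateDist = S.stateDist := by
  funext π x₀ k
  induction k with
  | zero => rfl
  | succ k ih => simp only [stateDist, ih]; rfl

lemma Jpert_eq_perturb_Jcost (δ : ℝ≥0) : S.Jpert δ = (S.perturb δ).Jcost := by
  funext π x₀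
  simp only [Jpert, Jcost, stageCostPert, stageCost, expect, perturb_stateDist]
  rfl

lemma JhatPert_eq_perturb_Jstar (δ : ℝ≥0) : S.JhatPert δ = (S.perturb δ).Jstar := by
  funext x
  simp only [JhatPert, Jstar, Jpert_eq_perturb_Jcost]
  rfl

lemma stageCostPert_eq (δ : ℝ≥0∞) (π : ℕ → X → U) (x₀ : X) (k : ℕ) :
    S.stageCostPert δ π x₀ k = S.stageCost π x₀ k + δ * S.r π x₀ k := by
  have hδ : (fun x => if x = S.t then 0 else δ) = fun x => δ * if x = S.t then 0 else 1 := by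
    funext x; split_ifs <;> simp
  simp only [stageCostPert, PMF.tsum_mul_add_const]
  rw [expect_add, hδ, expect_const_mul, stageCost, r]

lemma Jpert_eq_Jcost_add_mul_N (δ : ℝ≥0∞) (π : ℕ → X → U) (x₀ : X) :
    S.Jpert δ π x₀ = S.Jcost π x₀ + δ * S.N π x₀ := by
  simp only [Jpert, stageCostPert_eq, ENNReal.tsum_add, ENNReal.tsum_mul_left, Jcost, N]

lemma properAt_of_Jpert_lt_top {δ : ℝ≥0∞} (hδ : δ ≠ 0) {π : ℕ → X → U} (hπ : S.IsPolicy π)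
    {x : X} (h : S.Jpert δ π x < ⊤) : S.ProperAt π x := by
  rw [Jpert_eq_Jcost_add_mul_N, ENNReal.add_lt_top] at h
  exact ⟨hπ, h.1, ENNReal.lt_top_of_mul_ne_top_right h.2.ne hδ⟩

lemma JhatPert_lt_top_of_mem_Xhat {δ : ℝ≥0∞} (hδ : δ ≠ ⊤) {x : X} (hx : x ∈ S.Xhat) :
    S.JhatPert δ x < ⊤ := by
  obtain ⟨π, hπ, -⟩ : ∃ π, S.ProperAt π x ∧ S.Jcost π x < ⊤ := by
    simpa only [Xhat, Set.mem_ofPred_eq, Jhat, iInf_lt_iff, exists_prop] using hx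
  refine (iInf₂_le π hπ.1).trans_lt ?_
  rw [Jpert_eq_Jcost_add_mul_N]
  exact ENNReal.add_lt_top.2 ⟨hπ.2.1, ENNReal.mul_lt_top hδ.lt_top hπ.2.2⟩

end Perturbation

end SSP

/-- For fixed `δ > 0`, `ε > 0`, there exists an `ε`-optimal policy for the
`δ`-perturbed problem, and every such policy is proper at every `x ∈ X̂`. -/
theorem eps_optimal_perturbed_exists_and_proper {X U W : Type*} [Countable W] (S : SSP X U W)
    (δ ε : ℝ≥0) (hδ : 0 < δ) (hε : 0 < ε) :
    (∃ πε : ℕ → X → U, S.IsPolicy πε ∧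
        ∀ x, S.Jpert (δ : ℝ≥0∞) πε x ≤ S.JhatPert (δ : ℝ≥0∞) x + (ε : ℝ≥0∞)) ∧
    (∀ πε : ℕ → X → U, S.IsPolicy πε →
      (∀ x, S.Jpert (δ : ℝ≥0∞) πε x ≤ S.JhatPert (δ : ℝ≥0∞) x + (ε : ℝ≥0∞)) →
      ∀ x ∈ S.Xhat, S.ProperAt πε x) := by
  refine ⟨?_, fun πε hπε hle x hx => ?_⟩
  · rw [S.Jpert_eq_perturb_Jcost, S.JhatPert_eq_perturb_Jstar]
    exact (S.perturb δ).exists_isPolicy_Jcost_le_Jstar_add (ENNReal.coe_ne_zero.2 hε.ne')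
  · have hJhatPert : S.JhatPert δ x < ⊤ := S.JhatPert_lt_top_of_mem_Xhat ENNReal.coe_ne_top hx
    exact S.properAt_of_Jpert_lt_top (ENNReal.coe_ne_zero.2 hδ.ne') hπε
      ((hle x).trans_lt (ENNReal.add_lt_top.2 ⟨hJhatPert, ENNReal.coe_lt_top⟩))
end

section
/- For every δ > 0, every x ∈ X̂, and every policy π ∈ Π̂_x proper at x, one has Ĵ(x) ≤ Ĵ_δ(x) ≤ J_π(x) + δ·Σ_{k≥0} r_k(π,x), and the quantity δ·Σ_{k≥0} r_k(π,x) is finite and tends to 0 as δ↓0. -/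
open scoped ENNReal
open Filter
open scoped Classical NNReal

lemma SSP.jpert_eq {X U W : Type*} [Countable W] (S : SSP X U W) (δ : ℝ≥0∞)
    (π : ℕ → X → U) (x₀ : X) :
    S.Jpert δ π x₀ = S.Jcost π x₀ + δ * S.N π x₀ := by
  have hstage : ∀ k, S.stageCostPert δ π x₀ k = S.stageCost π x₀ k + δ * S.r π x₀ k := by
    intro k
    unfold SSP.stageCostPert SSP.stageCost SSP.r SSP.expect
    rw [← ENNReal.tsum_mul_left, ← ENNReal.tsum_add]
    congr 1; funext y
    have hinner : (∑' w, S.P y (π k y) w * (S.g y (π k y) w + if y = S.t then 0 else δ))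
        = (∑' w, S.P y (π k y) w * S.g y (π k y) w) + (if y = S.t then 0 else δ) :=
      calc (∑' w, S.P y (π k y) w * (S.g y (π k y) w + if y = S.t then 0 else δ))
          = ∑' w, (S.P y (π k y) w * S.g y (π k y) w
              + S.P y (π k y) w * (if y = S.t then 0 else δ)) :=
            tsum_congr fun w => mul_add _ _ _
        _ = (∑' w, S.P y (π k y) w * S.g y (π k y) w)
              + ∑' w, S.P y (π k y) w * (if y = S.t then 0 else δ) := ENNReal.tsum_add
        _ = (∑' w, S.P y (π k y) w * S.g y (π k y) w) + (if y = S.t then 0 else δ) := by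
            rw [ENNReal.tsum_mul_right, (S.P y (π k y)).tsum_coe, one_mul]
    beta_reduce
    rw [hinner, mul_add]
    by_cases h : y = S.t
    · simp [h]
    · simp only [if_neg h, mul_one]
      rw [mul_comm δ]
  unfold SSP.Jpert SSP.Jcost SSP.N
  rw [tsum_congr hstage, ENNReal.tsum_add, ENNReal.tsum_mul_left]

/-- For every `δ > 0`, `x ∈ X̂`, and `π` proper at `x`:
`Ĵ(x) ≤ Ĵ_δ(x) ≤ J_π(x) + δ·Σ_k r_k(π,x)`, and `δ·Σ_k r_k(π,x)` is finite and
tends to `0` as `δ ↓ 0`. -/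
theorem perturbed_opt_sandwich {X U W : Type*} [Countable W] (S : SSP X U W)
    (δ : ℝ≥0) (hδ : 0 < δ) (x : X) (hx : x ∈ S.Xhat)
    (π : ℕ → X → U) (hπ : S.ProperAt π x) :
    S.Jhat x ≤ S.JhatPert (δ : ℝ≥0∞) x ∧
    S.JhatPert (δ : ℝ≥0∞) x ≤ S.Jcost π x + (δ : ℝ≥0∞) * S.N π x ∧
    (δ : ℝ≥0∞) * S.N π x < ⊤ ∧
    Tendsto (fun d : ℝ≥0 => (d : ℝ≥0∞) * S.N π x)
      (nhdsWithin 0 (Set.Ioi 0)) (nhds 0) := by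
  have hNlt : (δ : ℝ≥0∞) * S.N π x < ⊤ := ENNReal.mul_lt_top ENNReal.coe_lt_top hπ.2.2
  refine ⟨?_, ?_, hNlt, ?_⟩
  · refine le_iInf₂ fun π' hπ' => ?_
    rw [S.jpert_eq]
    by_cases hfin : S.Jcost π' x + (δ : ℝ≥0∞) * S.N π' x < ⊤
    · have hJc : S.Jcost π' x < ⊤ := lt_of_le_of_lt le_self_add hfin
      have hN : S.N π' x < ⊤ := by
        by_contra h
        rw [not_lt, top_le_iff] at h
        rw [h, ENNReal.mul_top (by exact_mod_cast hδ.ne')] at hfin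
        simp at hfin
      exact le_add_right (iInf₂_le_of_le π' ⟨hπ', hJc, hN⟩ le_rfl)
    · rw [not_lt, top_le_iff] at hfin
      rw [hfin]; exact le_top
  · have h := iInf₂_le (f := fun π _ => S.Jpert (δ : ℝ≥0∞) π x) π hπ.1
    rw [S.jpert_eq] at h
    exact h
  · have h1 : Tendsto (fun d : ℝ≥0 => (d : ℝ≥0∞)) (nhdsWithin 0 (Set.Ioi 0)) (nhds 0) := by
      have : Tendsto (fun d : ℝ≥0 => (d : ℝ≥0∞)) (nhds 0) (nhds ((0 : ℝ≥0) : ℝ≥0∞)) :=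
        ENNReal.tendsto_coe.2 tendsto_id
      simpa using this.mono_left nhdsWithin_le_nhds
    simpa using ENNReal.Tendsto.mul_const h1 (Or.inr hπ.2.2.ne)
end

section
/- Let π = (μ₀,μ₁,…) be a policy proper at a state x₀ (i.e., (π,x₀) ∈ C). Then E^π_{x₀}[J_{π_k}(x_k)] → 0 as k → ∞, where π_k = (μ_k,μ_{k+1},…) is the tail policy and x_k is the state after k steps under π from x₀. -/
open scoped ENNReal
open Filter
open scoped Classical NNReal

lemma SSP.stateDist_add {X U W : Type*} [Countable W] (S : SSP X U W)
    (π : ℕ → X → U) (x₀ : X) (k m : ℕ) :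
    S.stateDist π x₀ (k + m)
      = (S.stateDist π x₀ k).bind (fun x => S.stateDist (SSP.tail π k) x m) := by
  induction m with
  | zero => simp [SSP.stateDist]
  | succ m ih =>
    show S.stateDist π x₀ (k + m + 1) = _
    rw [SSP.stateDist, ih]
    rw [PMF.bind_bind]
    rfl

lemma SSP.stageCost_add {X U W : Type*} [Countable W] (S : SSP X U W)
    (π : ℕ → X → U) (x₀ : X) (k m : ℕ) :
    S.stageCost π x₀ (k + m)
      = ∑' x, S.stateDist π x₀ k x * S.stageCost (SSP.tail π k) x m := by
  have hG : ∀ x, S.stageCost (SSP.tail π k) x m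
      = ∑' y, S.stateDist (SSP.tail π k) x m y *
          ∑' w, S.P y (π (k + m) y) w * S.g y (π (k + m) y) w := fun x => rfl
  simp only [hG]
  rw [SSP.stageCost, SSP.expect]
  rw [S.stateDist_add π x₀ k m]
  simp only [PMF.bind_apply, ← ENNReal.tsum_mul_right, mul_assoc]
  rw [ENNReal.tsum_comm]
  congr 1
  ext x
  rw [← ENNReal.tsum_mul_left]

lemma SSP.expect_tail_Jcost {X U W : Type*} [Countable W] (S : SSP X U W)
    (π : ℕ → X → U) (x₀ : X) (k : ℕ) :
    S.expect π x₀ k (S.Jcost (SSP.tail π k)) = ∑' m, S.stageCost π x₀ (k + m) := by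
  rw [SSP.expect]
  simp only [SSP.Jcost, ENNReal.tsum_mul_left.symm]
  rw [ENNReal.tsum_comm]
  congr 1
  ext m
  exact (S.stageCost_add π x₀ k m).symm

/-- If `π` is proper at `x₀`, then `E^π_{x₀}[J_{π_k}(x_k)] → 0`
as `k → ∞`, where `π_k` is the tail policy. -/
theorem expected_tail_cost_tendsto_zero {X U W : Type*} [Countable W] (S : SSP X U W)
    (π : ℕ → X → U) (x₀ : X) (h : S.ProperAt π x₀) :
    Tendsto (fun k => S.expect π x₀ k (S.Jcost (SSP.tail π k))) atTop (nhds 0) := by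
  have hfin : ∑' m, S.stageCost π x₀ m ≠ ⊤ := h.2.1.ne
  have := ENNReal.tendsto_sum_nat_add (S.stageCost π x₀) hfin
  refine this.congr fun k => ?_
  rw [S.expect_tail_Jcost π x₀ k]
  exact tsum_congr fun m => by rw [Nat.add_comm]
end
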